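/- arXiv:1102.4351 — 2 statements merged into one kernel-verified Lean document; each statement's English description precedes it below -/
import Mathlib

section
/- Let p ≥ 1, let S be a symmetric positive definite p×p real matrix, let μ_0, μ_1 ∈ ℝ^p, let f be a probability density on ℝ (f ≥ 0, ∫ f = 1) and s_0, s_1 ∈ ℝ. Set α_{jl} := ∫ f(v − s_j) f(v − s_l) / (f(v − s_0) + f(v − s_1)) dv for j, l ∈ {0,1} (with the integrand taken to be 0 where the denominator vanishes), and A := (S + μ_0 μ_0ᵀ + μ_1 μ_1ᵀ)^{−1} (α_{00} μ_0 μ_0ᵀ + α_{11} μ_1 μ_1ᵀ + α_{01} (μ_0 μ_1ᵀ + μ_1 μ_0ᵀ)). Then there exists an integer k₀ ≥ 1 such that ‖A^{k₀} v‖₂ < ‖v‖₂ for every nonzero v ∈ ℝ^p; moreover, when p = 1 one can take k₀ = 1. -/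
/-!
Write `M = S + μ₀μ₀ᵀ + μ₁μ₁ᵀ` and `N = α₀₀μ₀μ₀ᵀ + α₁₁μ₁μ₁ᵀ + α₀₁(μ₀μ₁ᵀ + μ₁μ₀ᵀ)`, so `M A = N`.
Since `f(· - s₀)` and `f(· - s₁)` are probability densities, `α₀₀ = α₁₁ = 1 - β` with
`β = α₀₁ ∈ [0, 1/2]`; hence `N = β(μ₀+μ₁)(μ₀+μ₁)ᵀ + (1-2β)(μ₀μ₀ᵀ + μ₁μ₁ᵀ)` is positive
semidefinite and `M - S - N = β(μ₀-μ₁)(μ₀-μ₁)ᵀ` is too. For the inner product `⟨u, w⟩_M = uᵀMw`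
the map `A` is self-adjoint with `⟨Av, v⟩_M = vᵀNv ≤ c ⟨v, v⟩_M` for some `c < 1`, because `S`
dominates a multiple of `M`; Cauchy–Schwarz for `N` upgrades this to `‖Av‖_M ≤ c ‖v‖_M`. As the
`M`-norm is equivalent to the Euclidean norm, `A^k` contracts the latter once `c^k` is small
enough; for `p = 1` the two norms are proportional, so `k = 1` works.
-/

open MeasureTheory Matrix

section OverlapIntegrals
variable {a b : ℝ}

theorem mul_self_div_add_add_mul_div_add (ha : 0 ≤ a) (hb : 0 ≤ b) :
    a * a / (a + b) + a * b / (a + b) = a := by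
  rcases (add_nonneg ha hb).eq_or_lt with hab | hab
  · obtain rfl : a = 0 := by linarith
    simp
  · rw [← add_div, ← mul_add, mul_div_assoc, div_self hab.ne', mul_one]

theorem mul_div_add_le_quarter (ha : 0 ≤ a) (hb : 0 ≤ b) : a * b / (a + b) ≤ (a + b) / 4 := by
  rcases (add_nonneg ha hb).eq_or_lt with hab | hab
  · simp [← hab]
  · rw [div_le_div_iff₀ hab (by norm_num)]
    nlinarith [sq_nonneg (a - b)]

variable {α : Type*} [MeasurableSpace α] {μ : Measure α} {g h : α → ℝ}

theorem MeasureTheory.Integrable.mul_div_add {k : α → ℝ} (hg : Integrable g μ)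
    (hh : AEMeasurable h μ) (hk : AEMeasurable k μ) (hg0 : ∀ x, 0 ≤ g x) (hk0 : ∀ x, 0 ≤ k x)
    (hkh : ∀ x, k x ≤ g x + h x) : Integrable (fun x ↦ g x * k x / (g x + h x)) μ := by
  refine hg.mono ((hg.aemeasurable.mul hk).div (hg.aemeasurable.add hh)).aestronglyMeasurable
    (.of_forall fun x ↦ ?_)
  rw [Real.norm_of_nonneg (div_nonneg (mul_nonneg (hg0 x) (hk0 x)) ((hk0 x).trans (hkh x))),
    Real.norm_of_nonneg (hg0 x), mul_div_assoc]
  exact mul_le_of_le_one_right (hg0 x) (div_le_one_of_le₀ (hkh x) ((hk0 x).trans (hkh x)))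

theorem integral_mul_self_div_add (hg : Integrable g μ) (hh : Integrable h μ) (hg0 : ∀ x, 0 ≤ g x)
    (hh0 : ∀ x, 0 ≤ h x) :
    ∫ x, g x * g x / (g x + h x) ∂μ = ∫ x, g x ∂μ - ∫ x, g x * h x / (g x + h x) ∂μ := by
  rw [eq_sub_iff_add_eq, ← integral_add]
  · exact integral_congr_ae (.of_forall fun x ↦ mul_self_div_add_add_mul_div_add (hg0 x) (hh0 x))
  · exact hg.mul_div_add hh.aemeasurable hg.aemeasurable hg0 hg0
      fun x ↦ le_add_of_nonneg_right (hh0 x)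
  · exact hg.mul_div_add hh.aemeasurable hh.aemeasurable hg0 hh0
      fun x ↦ le_add_of_nonneg_left (hg0 x)

theorem integral_mul_div_add_le (hg : Integrable g μ) (hh : Integrable h μ) (hg0 : ∀ x, 0 ≤ g x)
    (hh0 : ∀ x, 0 ≤ h x) :
    ∫ x, g x * h x / (g x + h x) ∂μ ≤ (∫ x, g x ∂μ + ∫ x, h x ∂μ) / 4 := by
  rw [← integral_add hg hh, ← integral_div]
  exact integral_mono_of_nonneg
    (.of_forall fun x ↦ div_nonneg (mul_nonneg (hg0 x) (hh0 x)) (add_nonneg (hg0 x) (hh0 x)))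
    ((hg.add hh).div_const 4) (.of_forall fun x ↦ mul_div_add_le_quarter (hg0 x) (hh0 x))

theorem overlap_weights (hg : Integrable g μ) (hh : Integrable h μ) (hg0 : ∀ x, 0 ≤ g x)
    (hh0 : ∀ x, 0 ≤ h x) (hg1 : ∫ x, g x ∂μ = 1) (hh1 : ∫ x, h x ∂μ = 1) :
    ∫ x, g x * g x / (g x + h x) ∂μ = 1 - ∫ x, g x * h x / (g x + h x) ∂μ ∧
    ∫ x, h x * h x / (g x + h x) ∂μ = 1 - ∫ x, g x * h x / (g x + h x) ∂μ ∧
    0 ≤ ∫ x, g x * h x / (g x + h x) ∂μ ∧ ∫ x, g x * h x / (g x + h x) ∂μ ≤ 1 / 2 := by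
  refine ⟨hg1 ▸ integral_mul_self_div_add hg hh hg0 hh0, ?_,
    integral_nonneg fun x ↦ div_nonneg (mul_nonneg (hg0 x) (hh0 x)) (add_nonneg (hg0 x) (hh0 x)),
    by linarith [integral_mul_div_add_le hg hh hg0 hh0 (μ := μ)]⟩
  have hswap := integral_mul_self_div_add hh hg hh0 hg0
  simp only [add_comm (h _), mul_comm (h _)] at hswap
  rw [hswap, hh1]

end OverlapIntegrals

section QuadraticForms
variable {n : Type*} [Fintype n]

theorem posSemidef_vecMulVec_self (a : n → ℝ) : (vecMulVec a a).PosSemidef := by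
  simpa using posSemidef_vecMulVec_self_star a

theorem dotProduct_smul_mulVec_smul (M : Matrix n n ℝ) (t : ℝ) (v : n → ℝ) :
    (t • v) ⬝ᵥ M *ᵥ (t • v) = t ^ 2 * (v ⬝ᵥ M *ᵥ v) := by
  rw [mulVec_smul, dotProduct_smul, smul_dotProduct, smul_eq_mul, smul_eq_mul]
  ring

theorem Matrix.PosDef.exists_dotProduct_mulVec_le_mul {S : Matrix n n ℝ} (hS : S.PosDef)
    (M : Matrix n n ℝ) : ∃ C > 0, ∀ v, v ⬝ᵥ M *ᵥ v ≤ C * (v ⬝ᵥ S *ᵥ v) := by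
  set ratio : (n → ℝ) → ℝ := fun v ↦ (v ⬝ᵥ M *ᵥ v) / (v ⬝ᵥ S *ᵥ v)
  have hpos {v : n → ℝ} (hv : v ≠ 0) : 0 < v ⬝ᵥ S *ᵥ v := by
    simpa using hS.dotProduct_mulVec_pos hv
  have hcont : ContinuousOn ratio (Metric.sphere 0 1) := by
    refine ContinuousOn.div (by fun_prop) (by fun_prop) fun v hv ↦ (hpos ?_).ne'
    exact ne_zero_of_mem_unit_sphere ⟨v, hv⟩
  obtain ⟨C, hC⟩ := (isCompact_sphere (0 : n → ℝ) 1).exists_bound_of_continuousOn hcont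
  refine ⟨max C 1, by positivity, fun v ↦ ?_⟩
  rcases eq_or_ne v 0 with rfl | hv
  · simp
  -- the ratio is invariant under scaling, so its bound on the unit sphere is global
  have hscale : ratio v = ratio (‖v‖⁻¹ • v) := by
    simp only [ratio, dotProduct_smul_mulVec_smul]
    exact (mul_div_mul_left _ _ (by positivity)).symm
  have hratio : ratio v ≤ max C 1 :=
    calc ratio v = ratio (‖v‖⁻¹ • v) := hscale
      _ ≤ ‖ratio (‖v‖⁻¹ • v)‖ := le_abs_self _
      _ ≤ C := hC _ <| mem_sphere_zero_iff_norm.2 <| by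
          rw [norm_smul, norm_inv, norm_norm, inv_mul_cancel₀ (norm_ne_zero_iff.2 hv)]
      _ ≤ max C 1 := le_max_left _ _
  calc v ⬝ᵥ M *ᵥ v = ratio v * (v ⬝ᵥ S *ᵥ v) := (div_mul_cancel₀ _ (hpos hv).ne').symm
    _ ≤ max C 1 * (v ⬝ᵥ S *ᵥ v) := mul_le_mul_of_nonneg_right hratio (hpos hv).le

theorem dotProduct_self_lt_of_dotProduct_mulVec_le {M B : Matrix n n ℝ} {ε L C : ℝ} (hε : 0 < ε)
    (hlow : ∀ v, ε * (v ⬝ᵥ v) ≤ v ⬝ᵥ M *ᵥ v) (hup : ∀ v, v ⬝ᵥ M *ᵥ v ≤ L * (v ⬝ᵥ v))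
    (hB : ∀ v, B *ᵥ v ⬝ᵥ M *ᵥ B *ᵥ v ≤ C * (v ⬝ᵥ M *ᵥ v)) (hC : 0 ≤ C) (hCL : C * L < ε)
    {v : n → ℝ} (hv : v ≠ 0) : B *ᵥ v ⬝ᵥ B *ᵥ v < v ⬝ᵥ v := by
  have hvv : 0 < v ⬝ᵥ v := by simpa using dotProduct_self_star_pos_iff.2 hv
  refine lt_of_mul_lt_mul_left ?_ hε.le
  calc ε * (B *ᵥ v ⬝ᵥ B *ᵥ v) ≤ C * (v ⬝ᵥ M *ᵥ v) := (hlow _).trans (hB v)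
    _ ≤ C * (L * (v ⬝ᵥ v)) := mul_le_mul_of_nonneg_left (hup v) hC
    _ < ε * (v ⬝ᵥ v) := by rw [← mul_assoc]; exact mul_lt_mul_of_pos_right hCL hvv

theorem dotProduct_mulVec_mulVec_le_sq {M N A : Matrix n n ℝ} (hM : ∀ v, 0 ≤ v ⬝ᵥ M *ᵥ v)
    (hN : N.PosSemidef) (hMA : M * A = N) {c : ℝ} (hNM : ∀ v, v ⬝ᵥ N *ᵥ v ≤ c * (v ⬝ᵥ M *ᵥ v))
    (v : n → ℝ) : A *ᵥ v ⬝ᵥ M *ᵥ A *ᵥ v ≤ c ^ 2 * (v ⬝ᵥ M *ᵥ v) := by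
  set X := A *ᵥ v ⬝ᵥ M *ᵥ A *ᵥ v
  have hX : X = A *ᵥ v ⬝ᵥ N *ᵥ v := by rw [← hMA, ← mulVec_mulVec]
  have hN0 (w : n → ℝ) : 0 ≤ w ⬝ᵥ N *ᵥ w := by simpa using hN.dotProduct_mulVec_nonneg w
  have hCS : X ^ 2 ≤ (A *ᵥ v ⬝ᵥ N *ᵥ A *ᵥ v) * (v ⬝ᵥ N *ᵥ v) := by
    classical
    have hsymm : LinearMap.IsSymm (toBilin' N) :=
      LinearMap.BilinForm.isSymm_iff.1 <| isSymm_toBilin'_iff_isSymm.2 <| by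
        simpa using hN.isHermitian
    simpa only [toBilin'_apply', hX] using
      (toBilin' N).apply_sq_le_of_symm (fun w ↦ by simpa only [toBilin'_apply'] using hN0 w) hsymm
        (A *ᵥ v) v
  have hX2 : X ^ 2 ≤ X * (c ^ 2 * (v ⬝ᵥ M *ᵥ v)) :=
    calc X ^ 2 ≤ (A *ᵥ v ⬝ᵥ N *ᵥ A *ᵥ v) * (v ⬝ᵥ N *ᵥ v) := hCS
      _ ≤ (c * X) * (c * (v ⬝ᵥ M *ᵥ v)) :=
        mul_le_mul (hNM _) (hNM v) (hN0 v) ((hN0 _).trans (hNM _))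
      _ = X * (c ^ 2 * (v ⬝ᵥ M *ᵥ v)) := by ring
  rcases (hM (A *ᵥ v)).eq_or_lt with hX0 | hX0
  · rw [show X = 0 from hX0.symm]
    exact mul_nonneg (sq_nonneg c) (hM v)
  · rw [sq] at hX2
    exact le_of_mul_le_mul_left hX2 hX0

theorem exists_dotProduct_mulVec_mulVec_le {S M N A : Matrix n n ℝ} (hS : S.PosDef)
    (hN : N.PosSemidef) (hSNM : ∀ v, v ⬝ᵥ S *ᵥ v + v ⬝ᵥ N *ᵥ v ≤ v ⬝ᵥ M *ᵥ v)
    (hMA : M * A = N) :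
    ∃ c, 0 ≤ c ∧ c < 1 ∧ ∀ v, A *ᵥ v ⬝ᵥ M *ᵥ A *ᵥ v ≤ c * (v ⬝ᵥ M *ᵥ v) := by
  have hS0 (v : n → ℝ) : 0 ≤ v ⬝ᵥ S *ᵥ v := by simpa using hS.posSemidef.dotProduct_mulVec_nonneg v
  have hN0 (v : n → ℝ) : 0 ≤ v ⬝ᵥ N *ᵥ v := by simpa using hN.dotProduct_mulVec_nonneg v
  have hM0 (v : n → ℝ) : 0 ≤ v ⬝ᵥ M *ᵥ v := by linarith [hS0 v, hN0 v, hSNM v]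
  obtain ⟨C, -, hC⟩ := hS.exists_dotProduct_mulVec_le_mul M
  set C' := max C 1
  have hC' : 1 ≤ C' := le_max_right _ _
  have hNM (v : n → ℝ) : v ⬝ᵥ N *ᵥ v ≤ (1 - C'⁻¹) * (v ⬝ᵥ M *ᵥ v) := by
    have : v ⬝ᵥ M *ᵥ v ≤ C' * (v ⬝ᵥ S *ᵥ v) :=
      (hC v).trans (mul_le_mul_of_nonneg_right (le_max_left _ _) (hS0 v))
    have : C'⁻¹ * (v ⬝ᵥ M *ᵥ v) ≤ v ⬝ᵥ S *ᵥ v := by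
      rwa [inv_mul_le_iff₀ (by positivity)]
    linarith [hSNM v]
  refine ⟨(1 - C'⁻¹) ^ 2, sq_nonneg _, ?_, dotProduct_mulVec_mulVec_le_sq hM0 hN hMA hNM⟩
  have : 0 < C'⁻¹ := by positivity
  have : C'⁻¹ ≤ 1 := inv_le_one_of_one_le₀ hC'
  nlinarith

theorem dotProduct_mulVec_pow_mulVec_le [DecidableEq n] {M A : Matrix n n ℝ} {c : ℝ} (hc : 0 ≤ c)
    (hA : ∀ v, A *ᵥ v ⬝ᵥ M *ᵥ A *ᵥ v ≤ c * (v ⬝ᵥ M *ᵥ v)) (k : ℕ) (v : n → ℝ) :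
    (A ^ k) *ᵥ v ⬝ᵥ M *ᵥ (A ^ k) *ᵥ v ≤ c ^ k * (v ⬝ᵥ M *ᵥ v) := by
  induction k with
  | zero => simp
  | succ k ih =>
    rw [pow_succ', ← mulVec_mulVec, pow_succ', mul_assoc]
    exact (hA _).trans (mul_le_mul_of_nonneg_left ih hc)

theorem exists_pow_dotProduct_mulVec_lt [DecidableEq n] {M A : Matrix n n ℝ} (hM : M.PosDef) {c : ℝ}
    (hc0 : 0 ≤ c) (hc1 : c < 1) (hA : ∀ v, A *ᵥ v ⬝ᵥ M *ᵥ A *ᵥ v ≤ c * (v ⬝ᵥ M *ᵥ v)) :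
    ∃ k ≥ 1, ∀ v ≠ 0, (A ^ k) *ᵥ v ⬝ᵥ (A ^ k) *ᵥ v < v ⬝ᵥ v := by
  obtain ⟨C, hC, hlow⟩ := hM.exists_dotProduct_mulVec_le_mul 1
  obtain ⟨L, hL, hup⟩ := PosDef.one.exists_dotProduct_mulVec_le_mul M
  simp only [one_mulVec] at hlow hup
  obtain ⟨k, hk, hk1⟩ := (((tendsto_pow_atTop_nhds_zero_of_lt_one hc0 hc1).eventually
    (gt_mem_nhds (by positivity : 0 < C⁻¹ / L))).and (Filter.eventually_ge_atTop 1)).exists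
  refine ⟨k, hk1, fun v hv ↦ dotProduct_self_lt_of_dotProduct_mulVec_le (inv_pos.2 hC)
    (fun v ↦ ?_) hup (dotProduct_mulVec_pow_mulVec_le hc0 hA k) (pow_nonneg hc0 k)
    ((lt_div_iff₀ hL).1 hk) hv⟩
  rw [inv_mul_le_iff₀ hC]
  exact hlow v

theorem dotProduct_mulVec_lt_of_unique [Unique n] {M A : Matrix n n ℝ} (hM : M.PosDef) {c : ℝ}
    (hc0 : 0 ≤ c) (hc1 : c < 1) (hA : ∀ v, A *ᵥ v ⬝ᵥ M *ᵥ A *ᵥ v ≤ c * (v ⬝ᵥ M *ᵥ v))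
    {v : n → ℝ} (hv : v ≠ 0) : A *ᵥ v ⬝ᵥ A *ᵥ v < v ⬝ᵥ v := by
  have hMv (w : n → ℝ) : w ⬝ᵥ M *ᵥ w = M default default * (w ⬝ᵥ w) := by
    simp only [dotProduct, mulVec, Fintype.sum_unique]
    ring
  have hM0 : 0 < M default default := hM.diag_pos
  exact dotProduct_self_lt_of_dotProduct_mulVec_le hM0 (fun w ↦ (hMv w).ge) (fun w ↦ (hMv w).le)
    hA hc0 (mul_lt_of_lt_one_left hM0 hc1) hv

end QuadraticForms

section Backfitting
variable {n : Type*} [Fintype n] (μ0 μ1 : n → ℝ) {β : ℝ}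

theorem posSemidef_backfitting (hβ0 : 0 ≤ β) (hβ : β ≤ 1 / 2) :
    ((1 - β) • vecMulVec μ0 μ0 + (1 - β) • vecMulVec μ1 μ1 +
      β • (vecMulVec μ0 μ1 + vecMulVec μ1 μ0)).PosSemidef := by
  have hdecomp : (1 - β) • vecMulVec μ0 μ0 + (1 - β) • vecMulVec μ1 μ1 +
      β • (vecMulVec μ0 μ1 + vecMulVec μ1 μ0) =
      β • vecMulVec (μ0 + μ1) (μ0 + μ1) + (1 - 2 * β) • (vecMulVec μ0 μ0 + vecMulVec μ1 μ1) := by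
    ext i j
    simp only [Matrix.add_apply, Matrix.smul_apply, vecMulVec_apply, Pi.add_apply, smul_eq_mul]
    ring
  rw [hdecomp]
  exact ((posSemidef_vecMulVec_self _).smul hβ0).add
    (((posSemidef_vecMulVec_self _).add (posSemidef_vecMulVec_self _)).smul (by linarith))

theorem add_dotProduct_backfitting_le (S : Matrix n n ℝ) (hβ0 : 0 ≤ β) (v : n → ℝ) :
    v ⬝ᵥ S *ᵥ v + v ⬝ᵥ ((1 - β) • vecMulVec μ0 μ0 + (1 - β) • vecMulVec μ1 μ1 +
      β • (vecMulVec μ0 μ1 + vecMulVec μ1 μ0)) *ᵥ v ≤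
    v ⬝ᵥ (S + vecMulVec μ0 μ0 + vecMulVec μ1 μ1) *ᵥ v := by
  have hdecomp : S + vecMulVec μ0 μ0 + vecMulVec μ1 μ1 = S + ((1 - β) • vecMulVec μ0 μ0 +
      (1 - β) • vecMulVec μ1 μ1 + β • (vecMulVec μ0 μ1 + vecMulVec μ1 μ0)) +
      β • vecMulVec (μ0 - μ1) (μ0 - μ1) := by
    ext i j
    simp only [Matrix.add_apply, Matrix.smul_apply, vecMulVec_apply, Pi.sub_apply, smul_eq_mul]
    ring
  conv_rhs => rw [hdecomp, add_mulVec, add_mulVec, dotProduct_add, dotProduct_add]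
  exact le_add_of_nonneg_right <| by
    simpa using ((posSemidef_vecMulVec_self (μ0 - μ1)).smul hβ0).dotProduct_mulVec_nonneg v

end Backfitting

theorem sqrt_sum_sq_lt_sqrt_sum_sq {n : Type*} [Fintype n] {u v : n → ℝ} (h : u ⬝ᵥ u < v ⬝ᵥ v) :
    √(∑ i, u i ^ 2) < √(∑ i, v i ^ 2) := by
  simp only [dotProduct, ← sq] at h
  exact Real.sqrt_lt_sqrt (by positivity) h

theorem contraction_power_general
    (p : ℕ)
    (S : Matrix (Fin p) (Fin p) ℝ) (hS : S.PosDef)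
    (μ0 μ1 : Fin p → ℝ)
    (f : ℝ → ℝ) (hf0 : ∀ x, 0 ≤ f x) (hfint : Integrable f) (hf1 : ∫ x : ℝ, f x = 1)
    (s0 s1 : ℝ)
    (α00 α11 α01 : ℝ)
    (hα00 : α00 = ∫ v : ℝ, f (v - s0) * f (v - s0) / (f (v - s0) + f (v - s1)))
    (hα11 : α11 = ∫ v : ℝ, f (v - s1) * f (v - s1) / (f (v - s0) + f (v - s1)))
    (hα01 : α01 = ∫ v : ℝ, f (v - s0) * f (v - s1) / (f (v - s0) + f (v - s1)))
    (A : Matrix (Fin p) (Fin p) ℝ)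
    (hA : A = (S + vecMulVec μ0 μ0 + vecMulVec μ1 μ1)⁻¹ *
      (α00 • vecMulVec μ0 μ0 + α11 • vecMulVec μ1 μ1 +
        α01 • (vecMulVec μ0 μ1 + vecMulVec μ1 μ0))) :
    (∃ k₀ : ℕ, 1 ≤ k₀ ∧ ∀ v : Fin p → ℝ, v ≠ 0 →
      Real.sqrt (∑ i, ((A ^ k₀).mulVec v i) ^ 2) < Real.sqrt (∑ i, (v i) ^ 2)) ∧
    (p = 1 → ∀ v : Fin p → ℝ, v ≠ 0 →
      Real.sqrt (∑ i, (A.mulVec v i) ^ 2) < Real.sqrt (∑ i, (v i) ^ 2)) := by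
  obtain ⟨h00, h11, hβ0, hβ⟩ := overlap_weights (hfint.comp_sub_right s0)
    (hfint.comp_sub_right s1) (fun _ ↦ hf0 _) (fun _ ↦ hf0 _)
    (by rw [integral_sub_right_eq_self, hf1]) (by rw [integral_sub_right_eq_self, hf1])
  rw [← hα00, ← hα01] at h00
  rw [← hα11, ← hα01] at h11
  rw [← hα01] at hβ0 hβ
  subst h00 h11
  set M := S + vecMulVec μ0 μ0 + vecMulVec μ1 μ1
  have hM : M.PosDef :=
    (hS.add_posSemidef (posSemidef_vecMulVec_self μ0)).add_posSemidef (posSemidef_vecMulVec_self μ1)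
  have hMA := congrArg (M * ·) hA
  rw [mul_nonsing_inv_cancel_left _ _ ((isUnit_iff_isUnit_det M).1 hM.isUnit)] at hMA
  obtain ⟨c, hc0, hc1, hc⟩ := exists_dotProduct_mulVec_mulVec_le hS
    (posSemidef_backfitting μ0 μ1 hβ0 hβ) (add_dotProduct_backfitting_le μ0 μ1 S hβ0) hMA
  refine ⟨?_, fun hp ↦ ?_⟩
  · obtain ⟨k, hk1, hk⟩ := exists_pow_dotProduct_mulVec_lt hM hc0 hc1 hc
    exact ⟨k, hk1, fun v hv ↦ sqrt_sum_sq_lt_sqrt_sum_sq (hk v hv)⟩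
  · subst hp
    exact fun v hv ↦ sqrt_sum_sq_lt_sqrt_sum_sq (dotProduct_mulVec_lt_of_unique hM hc0 hc1 hc hv)

/-- Lemma 5: some power of the limit backfitting matrix A is a strict ℓ²-contraction;
for p = 1 already A itself is. -/
theorem contraction_power
    (p : ℕ) (hp : 1 ≤ p)
    (S : Matrix (Fin p) (Fin p) ℝ) (hS : S.PosDef)
    (μ0 μ1 : Fin p → ℝ)
    (f : ℝ → ℝ) (hf0 : ∀ x, 0 ≤ f x) (hfint : Integrable f) (hf1 : ∫ x : ℝ, f x = 1)
    (s0 s1 : ℝ)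
    (α00 α11 α01 : ℝ)
    (hα00 : α00 = ∫ v : ℝ, f (v - s0) * f (v - s0) / (f (v - s0) + f (v - s1)))
    (hα11 : α11 = ∫ v : ℝ, f (v - s1) * f (v - s1) / (f (v - s0) + f (v - s1)))
    (hα01 : α01 = ∫ v : ℝ, f (v - s0) * f (v - s1) / (f (v - s0) + f (v - s1)))
    (A : Matrix (Fin p) (Fin p) ℝ)
    (hA : A = (S + vecMulVec μ0 μ0 + vecMulVec μ1 μ1)⁻¹ *
      (α00 • vecMulVec μ0 μ0 + α11 • vecMulVec μ1 μ1 +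
        α01 • (vecMulVec μ0 μ1 + vecMulVec μ1 μ0))) :
    (∃ k₀ : ℕ, 1 ≤ k₀ ∧ ∀ v : Fin p → ℝ, v ≠ 0 →
      Real.sqrt (∑ i, ((A ^ k₀).mulVec v i) ^ 2) < Real.sqrt (∑ i, (v i) ^ 2)) ∧
    (p = 1 → ∀ v : Fin p → ℝ, v ≠ 0 →
      Real.sqrt (∑ i, (A.mulVec v i) ^ 2) < Real.sqrt (∑ i, (v i) ^ 2)) :=
  contraction_power_general p S hS μ0 μ1 f hf0 hfint hf1 s0 s1 α00 α11 α01 hα00 hα11 hα01 A hA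
end

section
/- Fix integers p ≥ 1 and n > p+1. Let θ ∈ ℝ^p, and for each l ∈ {p+1,…,n} let φ_l ∈ ℝ^p, e_l ∈ ℝ, w_l ∈ ℝ be given; let b : ℝ → ℝ and define X_l := φ_lᵀ θ + b(e_l) + w_l. Let κ : ℝ → ℝ be any function such that Σ_{j=p+1}^n κ(e_l − e_j) ≠ 0 for each l ∈ {p+1,…,n}, and assume Σ_n := Σ_{l=p+1}^n φ_l φ_lᵀ is invertible. Given θ̂^{(k−1)} ∈ ℝ^p, define b̂^{(k−1)}(e) := [Σ_{l=p+1}^n (X_l − φ_lᵀ θ̂^{(k−1)}) κ(e − e_l)] / [Σ_{l=p+1}^n κ(e − e_l)] and θ̂^{(k)} := Σ_n^{−1} Σ_{l=p+1}^n φ_l (X_l − b̂^{(k−1)}(e_l)). Then θ − θ̂^{(k)} = A_n (θ − θ̂^{(k−1)}) + R^{(1)} + R^{(2)}, where A_n := Σ_n^{−1} Σ_{l=p+1}^n φ_l · [Σ_{j=p+1}^n φ_jᵀ κ(e_l − e_j)] / [Σ_{j=p+1}^n κ(e_l − e_j)], R^{(1)} := Σ_n^{−1} Σ_{l=p+1}^n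 φ_l · [Σ_{j=p+1}^n (b(e_j) − b(e_l) + w_j) κ(e_l − e_j)] / [Σ_{j=p+1}^n κ(e_l − e_j)], and R^{(2)} := −Σ_n^{−1} Σ_{l=p+1}^n φ_l w_l. -/
/-!
Write `D_l = ∑_j κ(e_l - e_j)` and let `avg_l y = (∑_j y_j κ(e_l - e_j)) / D_l` be the kernel
average at `e_l`. Since `Σ_n θ = ∑_l (φ_lᵀ θ) φ_l`, we get
`θ - θ̂^{(k)} = Σ_n⁻¹ ∑_l (φ_lᵀ θ - X_l + b̂^{(k-1)}(e_l)) φ_l`, so everything reduces to a scalar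
identity at each `l`. There `b̂^{(k-1)}(e_l) = avg_l (X - φᵀ θ̂^{(k-1)})`, and substituting
`X_j = φ_jᵀ θ + b(e_l) + (b(e_j) - b(e_l) + w_j)` and using that `avg_l` is linear and fixes
constants (as `D_l ≠ 0`) gives
`φ_lᵀ θ - X_l + b̂^{(k-1)}(e_l) = (avg_l φ)ᵀ (θ - θ̂^{(k-1)}) + avg_l (b(e_·) - b(e_l) + w_·) - w_l`.
-/

open Matrix

section KernelAverage

variable {ι 𝕜 : Type*} [Field 𝕜] (s : Finset ι) (K : ι → 𝕜)

def kernelAverage (y : ι → 𝕜) : 𝕜 :=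
  (∑ j ∈ s, y j * K j) / ∑ j ∈ s, K j

theorem kernelAverage_add (y z : ι → 𝕜) :
    kernelAverage s K (y + z) = kernelAverage s K y + kernelAverage s K z := by
  simp only [kernelAverage, Pi.add_apply, add_mul, Finset.sum_add_distrib, add_div]

theorem kernelAverage_const (hK : ∑ j ∈ s, K j ≠ 0) (c : 𝕜) :
    kernelAverage s K (fun _ => c) = c := by
  rw [kernelAverage, ← Finset.mul_sum, mul_div_cancel_right₀ c hK]

theorem kernelAverage_dotProduct {m : Type*} [Fintype m] (φ : ι → m → 𝕜) (v : m → 𝕜) :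
    kernelAverage s K (fun j => φ j ⬝ᵥ v) = (fun i => kernelAverage s K (φ · i)) ⬝ᵥ v := by
  simp only [kernelAverage, dotProduct, Finset.sum_mul, div_mul_eq_mul_div, ← Finset.sum_div]
  rw [Finset.sum_comm]
  exact congrArg (· / _) (Finset.sum_congr rfl fun _ _ => Finset.sum_congr rfl fun _ _ => by ring)

end KernelAverage

theorem Matrix.sum_vecMulVec_mulVec {ι m R : Type*} [Fintype m] [CommSemiring R] (s : Finset ι)
    (a u : ι → m → R) (v : m → R) :
    (∑ l ∈ s, vecMulVec (a l) (u l)) *ᵥ v = ∑ l ∈ s, (u l ⬝ᵥ v) • a l := by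
  simp only [sum_mulVec, vecMulVec_mulVec, op_smul_eq_smul]

section LeastSquares

variable {ι m 𝕜 : Type*} [Fintype m] [DecidableEq m] [Field 𝕜]

theorem sub_inv_mulVec_sum_smul (s : Finset ι) (φ : ι → m → 𝕜) (y : ι → 𝕜) (θ : m → 𝕜)
    (hS : IsUnit (∑ l ∈ s, vecMulVec (φ l) (φ l))) :
    θ - (∑ l ∈ s, vecMulVec (φ l) (φ l))⁻¹ *ᵥ ∑ l ∈ s, y l • φ l =
      (∑ l ∈ s, vecMulVec (φ l) (φ l))⁻¹ *ᵥ ∑ l ∈ s, (φ l ⬝ᵥ θ - y l) • φ l := by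
  set S := ∑ l ∈ s, vecMulVec (φ l) (φ l)
  have hθ : θ = S⁻¹ *ᵥ ∑ l ∈ s, (φ l ⬝ᵥ θ) • φ l := by
    rw [← sum_vecMulVec_mulVec, mulVec_mulVec,
      nonsing_inv_mul S ((isUnit_iff_isUnit_det S).mp hS), one_mulVec]
  conv_lhs => rw [hθ]
  simp only [← mulVec_sub, ← Finset.sum_sub_distrib, sub_smul]

end LeastSquares

theorem backfitting_one_step_identity_general
    (p n : ℕ)
    (θ : Fin p → ℝ) (φ : ℕ → Fin p → ℝ) (e : ℕ → ℝ) (w : ℕ → ℝ) (b : ℝ → ℝ)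
    (X : ℕ → ℝ) (hXdef : ∀ l, X l = (∑ i, φ l i * θ i) + b (e l) + w l)
    (κ : ℝ → ℝ)
    (hden : ∀ l ∈ Finset.Icc (p + 1) n, (∑ j ∈ Finset.Icc (p + 1) n, κ (e l - e j)) ≠ 0)
    (Smat : Matrix (Fin p) (Fin p) ℝ)
    (hS : Smat = ∑ l ∈ Finset.Icc (p + 1) n, Matrix.vecMulVec (φ l) (φ l))
    (hSinv : IsUnit Smat)
    (θprev : Fin p → ℝ)
    (bhat : ℝ → ℝ)
    (hbhat : ∀ x : ℝ, bhat x =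
      (∑ l ∈ Finset.Icc (p + 1) n, (X l - ∑ i, φ l i * θprev i) * κ (x - e l)) /
      (∑ l ∈ Finset.Icc (p + 1) n, κ (x - e l)))
    (θnew : Fin p → ℝ)
    (hθnew : θnew = Smat⁻¹.mulVec (∑ l ∈ Finset.Icc (p + 1) n, (X l - bhat (e l)) • φ l))
    (An : Matrix (Fin p) (Fin p) ℝ)
    (hAn : An = Smat⁻¹ * ∑ l ∈ Finset.Icc (p + 1) n, Matrix.vecMulVec (φ l)
      (fun i => (∑ j ∈ Finset.Icc (p + 1) n, φ j i * κ (e l - e j)) /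
        (∑ j ∈ Finset.Icc (p + 1) n, κ (e l - e j))))
    (R1 R2 : Fin p → ℝ)
    (hR1 : R1 = Smat⁻¹.mulVec (∑ l ∈ Finset.Icc (p + 1) n,
      ((∑ j ∈ Finset.Icc (p + 1) n, (b (e j) - b (e l) + w j) * κ (e l - e j)) /
        (∑ j ∈ Finset.Icc (p + 1) n, κ (e l - e j))) • φ l))
    (hR2 : R2 = -(Smat⁻¹.mulVec (∑ l ∈ Finset.Icc (p + 1) n, w l • φ l))) :
    θ - θnew = An.mulVec (θ - θprev) + R1 + R2 := by
  set s := Finset.Icc (p + 1) n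
  have hX : ∀ j, X j = φ j ⬝ᵥ θ + b (e j) + w j := hXdef
  have hresidual : ∀ l ∈ s, φ l ⬝ᵥ θ - (X l - bhat (e l)) =
      (fun i => kernelAverage s (fun j => κ (e l - e j)) (φ · i)) ⬝ᵥ (θ - θprev) +
        kernelAverage s (fun j => κ (e l - e j)) (fun j => b (e j) - b (e l) + w j) - w l := by
    intro l hl
    have hsplit : (fun j => X j - φ j ⬝ᵥ θprev) = (fun j => φ j ⬝ᵥ (θ - θprev)) +
        ((fun j => b (e j) - b (e l) + w j) + fun _ => b (e l)) := by
      ext j; simp only [hX, dotProduct_sub, Pi.add_apply]; ring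
    have hbl : bhat (e l) = kernelAverage s (fun j => κ (e l - e j)) (fun j => X j - φ j ⬝ᵥ θprev) :=
      hbhat (e l)
    rw [hbl, hsplit, kernelAverage_add, kernelAverage_add, kernelAverage_const _ _ (hden l hl),
      kernelAverage_dotProduct, hX]
    ring
  rw [hθnew, hAn, hR1, hR2, hS, sub_inv_mulVec_sum_smul _ _ _ _ (hS ▸ hSinv), ← mulVec_mulVec,
    sum_vecMulVec_mulVec, ← mulVec_neg, ← mulVec_add, ← mulVec_add, Finset.sum_congr rfl
      fun l hl => congrArg (· • φ l) (hresidual l hl)]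
  simp only [sub_smul, add_smul, Finset.sum_sub_distrib, Finset.sum_add_distrib, ← sub_eq_add_neg]
  rfl

/-- The deterministic one-step backfitting error identity (formula (11)). -/
theorem backfitting_one_step_identity
    (p n : ℕ) (hp : 1 ≤ p) (hn : p + 1 < n)
    (θ : Fin p → ℝ) (φ : ℕ → Fin p → ℝ) (e : ℕ → ℝ) (w : ℕ → ℝ) (b : ℝ → ℝ)
    (X : ℕ → ℝ) (hXdef : ∀ l, X l = (∑ i, φ l i * θ i) + b (e l) + w l)
    (κ : ℝ → ℝ)
    (hden : ∀ l ∈ Finset.Icc (p + 1) n, (∑ j ∈ Finset.Icc (p + 1) n, κ (e l - e j)) ≠ 0)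
    (Smat : Matrix (Fin p) (Fin p) ℝ)
    (hS : Smat = ∑ l ∈ Finset.Icc (p + 1) n, Matrix.vecMulVec (φ l) (φ l))
    (hSinv : IsUnit Smat)
    (θprev : Fin p → ℝ)
    (bhat : ℝ → ℝ)
    (hbhat : ∀ x : ℝ, bhat x =
      (∑ l ∈ Finset.Icc (p + 1) n, (X l - ∑ i, φ l i * θprev i) * κ (x - e l)) /
      (∑ l ∈ Finset.Icc (p + 1) n, κ (x - e l)))
    (θnew : Fin p → ℝ)
    (hθnew : θnew = Smat⁻¹.mulVec (∑ l ∈ Finset.Icc (p + 1) n, (X l - bhat (e l)) • φ l))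
    (An : Matrix (Fin p) (Fin p) ℝ)
    (hAn : An = Smat⁻¹ * ∑ l ∈ Finset.Icc (p + 1) n, Matrix.vecMulVec (φ l)
      (fun i => (∑ j ∈ Finset.Icc (p + 1) n, φ j i * κ (e l - e j)) /
        (∑ j ∈ Finset.Icc (p + 1) n, κ (e l - e j))))
    (R1 R2 : Fin p → ℝ)
    (hR1 : R1 = Smat⁻¹.mulVec (∑ l ∈ Finset.Icc (p + 1) n,
      ((∑ j ∈ Finset.Icc (p + 1) n, (b (e j) - b (e l) + w j) * κ (e l - e j)) /
        (∑ j ∈ Finset.Icc (p + 1) n, κ (e l - e j))) • φ l))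
    (hR2 : R2 = -(Smat⁻¹.mulVec (∑ l ∈ Finset.Icc (p + 1) n, w l • φ l))) :
    θ - θnew = An.mulVec (θ - θprev) + R1 + R2 :=
  backfitting_one_step_identity_general p n θ φ e w b X hXdef κ hden Smat hS hSinv θprev bhat hbhat
    θnew hθnew An hAn R1 R2 hR1 hR2
end
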